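/- arXiv:2106.09860 — 2 statements merged into one kernel-verified Lean document; each statement's English description precedes it below -/
import Mathlib

section
/- Let K_{N;ℓ} = J_{N;ℓ} ∩ I_p. Then lim_{N→∞} |K_{N;ℓ}| / |J_{N;ℓ}| = 1 − 1/(p_1···p_d) for each fixed ℓ ≥ 1. -/
open Filter Finset Topology

/-!
Write `B_t(N)` for the box of indices `i ≥ 1` with `i k * p k ^ t ≤ N k`; it has
`∏ k ⌊N k / p k ^ t⌋` points, which is asymptotic to `P⁻ᵗ ∏ k N k` with `P = ∏ k p k`.
The set `J_{N;t+1}` is `B_t \ B_{t+1}`, so `|J_{N;t+1}| ~ (1 - P⁻¹) P⁻ᵗ ∏ k N k`.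
Multiplication by `p` maps `J_{N;t+2}` bijectively onto the points of `J_{N;t+1}` all of whose
coordinates are divisible by the corresponding `p k`, so `|K_{N;t+1}| = |J_{N;t+1}| - |J_{N;t+2}|`,
and the ratio tends to `1 - P⁻¹`.
-/

section

variable {ι : Type*} [Fintype ι] [DecidableEq ι]

def scaledBox (N m : ι → ℕ) : Finset (ι → ℕ) :=
  Fintype.piFinset fun k => Icc 1 (N k / m k)

-- `layer N p (ℓ - 1)` is the paper's `J_{N;ℓ}`.
def layer (N p : ι → ℕ) (t : ℕ) : Finset (ι → ℕ) :=
  scaledBox N (fun k => p k ^ t) \ scaledBox N (fun k => p k ^ (t + 1))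

theorem mem_scaledBox {N m i : ι → ℕ} (hm : ∀ k, 0 < m k) :
    i ∈ scaledBox N m ↔ ∀ k, 1 ≤ i k ∧ i k * m k ≤ N k := by
  simp only [scaledBox, Fintype.mem_piFinset, mem_Icc, Nat.le_div_iff_mul_le (hm _)]

theorem card_scaledBox (N m : ι → ℕ) : #(scaledBox N m) = ∏ k, N k / m k := by
  simp [scaledBox]

theorem scaledBox_pow_succ_subset {p : ι → ℕ} (hp : ∀ k, 0 < p k) (N : ι → ℕ) (t : ℕ) :
    scaledBox N (fun k => p k ^ (t + 1)) ⊆ scaledBox N (fun k => p k ^ t) :=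
  Fintype.piFinset_subset _ _ fun k => Icc_subset_Icc_right <|
    Nat.div_le_div_left (Nat.pow_le_pow_right (hp k) t.le_succ) (pow_pos (hp k) t)

theorem mem_layer {N p i : ι → ℕ} {t : ℕ} (hp : ∀ k, 0 < p k) :
    i ∈ layer N p t ↔
      (∀ k, 1 ≤ i k) ∧ (∀ k, i k * p k ^ t ≤ N k) ∧ ∃ k, N k < i k * p k ^ (t + 1) := by
  simp only [layer, Finset.mem_sdiff, mem_scaledBox fun k => pow_pos (hp k) _, forall_and,
    not_and, not_forall, not_le]
  tauto

theorem card_layer_add_card_scaledBox {p : ι → ℕ} (hp : ∀ k, 0 < p k) (N : ι → ℕ) (t : ℕ) :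
    #(layer N p t) + #(scaledBox N fun k => p k ^ (t + 1)) = #(scaledBox N fun k => p k ^ t) :=
  card_sdiff_add_card_eq_card (scaledBox_pow_succ_subset hp N t)

theorem mul_mem_layer_iff {N p j : ι → ℕ} {t : ℕ} (hp : ∀ k, 0 < p k) :
    (fun k => p k * j k) ∈ layer N p t ↔ j ∈ layer N p (t + 1) := by
  have hpow : ∀ k s, p k * j k * p k ^ s = j k * p k ^ (s + 1) := fun k s => by ring
  simp only [mem_layer hp, hpow, Nat.one_le_iff_ne_zero, mul_ne_zero_iff, fun k => (hp k).ne',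
    ne_eq, not_false_eq_true, true_and]

theorem filter_dvd_layer {p : ι → ℕ} (hp : ∀ k, 0 < p k) (N : ι → ℕ) (t : ℕ) :
    (layer N p t).filter (fun i => ∀ k, p k ∣ i k) =
      (layer N p (t + 1)).image fun j k => p k * j k := by
  ext i
  simp only [mem_filter, mem_image]
  constructor
  · rintro ⟨hi, hdvd⟩
    choose j hj using hdvd
    obtain rfl : i = fun k => p k * j k := funext hj
    exact ⟨j, (mul_mem_layer_iff hp).1 hi, rfl⟩
  · rintro ⟨j, hj, rfl⟩
    exact ⟨(mul_mem_layer_iff hp).2 hj, fun k => dvd_mul_right _ _⟩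

theorem card_filter_not_dvd_add_card_layer_succ {p : ι → ℕ} (hp : ∀ k, 0 < p k)
    (N : ι → ℕ) (t : ℕ) :
    #((layer N p t).filter fun i => ∃ k, ¬ p k ∣ i k) + #(layer N p (t + 1)) =
      #(layer N p t) := by
  have hinj : Function.Injective fun (j : ι → ℕ) k => p k * j k := fun a b hab =>
    funext fun k => Nat.eq_of_mul_eq_mul_left (hp k) (congrFun hab k)
  rw [← card_image_of_injective (layer N p (t + 1)) hinj, ← filter_dvd_layer hp,
    ← card_filter_add_card_filter_not (fun i => ∃ k, ¬ p k ∣ i k) (s := layer N p t)]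
  simp only [not_exists, not_not]

theorem tendsto_natDiv_div_self (q : ℕ) :
    Tendsto (fun n : ℕ => ((n / q : ℕ) : ℝ) / n) atTop (𝓝 (q : ℝ)⁻¹) :=
  ((tendsto_nat_floor_mul_div_atTop (inv_nonneg.2 q.cast_nonneg)).comp
    tendsto_natCast_atTop_atTop).congr fun n => by
      simp [inv_mul_eq_div, Nat.floor_div_eq_div]

theorem tendsto_card_scaledBox_div_prod (m : ι → ℕ) :
    Tendsto (fun N : ι → ℕ => (#(scaledBox N m) : ℝ) / ∏ k, (N k : ℝ)) atTop
      (𝓝 (∏ k, (m k : ℝ))⁻¹) := by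
  have heval (k : ι) : Tendsto (fun N : ι → ℕ => N k) atTop atTop :=
    tendsto_atTop_atTop.2 fun b => ⟨fun _ => b, fun _ h => h k⟩
  rw [← prod_inv_distrib]
  refine (tendsto_finsetProd univ fun k _ => (tendsto_natDiv_div_self (m k)).comp (heval k)).congr
    fun N => ?_
  simp [card_scaledBox, prod_div_distrib]

theorem tendsto_card_layer_div_prod {p : ι → ℕ} (hp : ∀ k, 0 < p k) (t : ℕ) :
    Tendsto (fun N : ι → ℕ => (#(layer N p t) : ℝ) / ∏ k, (N k : ℝ)) atTop
      (𝓝 ((1 - (∏ k, (p k : ℝ))⁻¹) * (∏ k, (p k : ℝ))⁻¹ ^ t)) := by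
  have hbox (s : ℕ) : Tendsto
      (fun N : ι → ℕ => (#(scaledBox N fun k => p k ^ s) : ℝ) / ∏ k, (N k : ℝ)) atTop
      (𝓝 ((∏ k, (p k : ℝ))⁻¹ ^ s)) := by
    simpa [prod_pow, inv_pow] using tendsto_card_scaledBox_div_prod (fun k => p k ^ s)
  convert (hbox t).sub (hbox (t + 1)) using 2 with N
  · rw [← sub_div, ← card_layer_add_card_scaledBox hp N t, Nat.cast_add, add_sub_cancel_right]
  · ring

end

/-- With `K_{N;ℓ} = J_{N;ℓ} ∩ I_p`, for each fixed `ℓ ≥ 1`,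
`|K_{N;ℓ}| / |J_{N;ℓ}| → 1 − 1/(p₁⋯p_d)` as all `N k → ∞`. -/
theorem stmt7 (d : ℕ) (hd : 0 < d) (p : Fin d → ℕ) (hp : ∀ k, 2 ≤ p k)
    (ℓ : ℕ) (hℓ : 1 ≤ ℓ) :
    Tendsto (fun N : Fin d → ℕ =>
        (Nat.card {i : Fin d → ℕ //
            (∀ k, 1 ≤ i k) ∧ (∀ k, i k * p k ^ (ℓ - 1) ≤ N k) ∧
            (∃ k, N k < i k * p k ^ ℓ) ∧ (∃ j, ¬ p j ∣ i j)} : ℝ) /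
          (Nat.card {i : Fin d → ℕ //
            (∀ k, 1 ≤ i k) ∧ (∀ k, i k * p k ^ (ℓ - 1) ≤ N k) ∧
            (∃ k, N k < i k * p k ^ ℓ)} : ℝ))
      atTop (nhds (1 - 1 / ∏ k, (p k : ℝ))) := by
  obtain ⟨t, rfl⟩ : ∃ t, ℓ = t + 1 := ⟨ℓ - 1, by omega⟩
  have hp0 (k : Fin d) : 0 < p k := by linarith [hp k]
  have hP : 1 < ∏ k, (p k : ℝ) := by
    have : Nonempty (Fin d) := Fin.pos_iff_nonempty.1 hd
    simpa using prod_lt_prod_of_nonempty (fun _ _ => one_pos)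
      (fun k _ => (by exact_mod_cast hp k : (1 : ℝ) < p k)) univ_nonempty
  have hJ (N : Fin d → ℕ) : Nat.card {i : Fin d → ℕ //
      (∀ k, 1 ≤ i k) ∧ (∀ k, i k * p k ^ (t + 1 - 1) ≤ N k) ∧
      (∃ k, N k < i k * p k ^ (t + 1))} = #(layer N p t) :=
    Nat.subtype_card _ fun i => by simp [mem_layer hp0]
  have hK (N : Fin d → ℕ) : (Nat.card {i : Fin d → ℕ //
      (∀ k, 1 ≤ i k) ∧ (∀ k, i k * p k ^ (t + 1 - 1) ≤ N k) ∧
      (∃ k, N k < i k * p k ^ (t + 1)) ∧ (∃ j, ¬ p j ∣ i j)} : ℝ) =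
      #(layer N p t) - #(layer N p (t + 1)) := by
    rw [eq_sub_iff_add_eq, ← card_filter_not_dvd_add_card_layer_succ hp0 N t, Nat.cast_add,
      Nat.subtype_card ((layer N p t).filter fun i => ∃ k, ¬ p k ∣ i k) fun i => by
        rw [mem_filter, mem_layer hp0, Nat.add_sub_cancel, and_assoc, and_assoc]]
    -- the two filters differ only in their `Decidable` instances
    congr
  have hc : (1 - (∏ k, (p k : ℝ))⁻¹) * (∏ k, (p k : ℝ))⁻¹ ^ t ≠ 0 :=
    mul_ne_zero (sub_ne_zero.2 (inv_lt_one_of_one_lt₀ hP).ne')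
      (pow_ne_zero _ (inv_ne_zero (one_pos.trans hP).ne'))
  have hlayer := tendsto_card_layer_div_prod hp0 (ι := Fin d)
  have hlim := ((hlayer t).sub (hlayer (t + 1))).div (hlayer t) hc
  rw [pow_succ, ← mul_assoc, ← mul_one_sub, mul_div_cancel_left₀ _ hc, ← one_div] at hlim
  refine hlim.congr' ?_
  filter_upwards [eventually_ge_atTop 1] with N hN
  have hQ : ∏ k, (N k : ℝ) ≠ 0 := prod_ne_zero_iff.2 fun k _ => by
    have : 1 ≤ N k := hN k
    positivity
  rw [hJ, hK, Pi.div_apply, ← sub_div, div_div_div_cancel_right₀ hQ]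
end

section
/- Let d ≥ 1 and p_1,...,p_d ≥ 2 pairwise coprime, and let σ = (σ_i)_{i∈ℕ^d} be i.i.d. uniform on {−1,1}. For S_N^p(σ) = ∑_{i_1=1}^{N_1}···∑_{i_d=1}^{N_d} σ_i σ_{p·i} (where p·i = (p_1 i_1, ..., p_d i_d)), the free energy F_{1/2}(β) = lim_{N→∞} (1/(N_1···N_d)) log E[exp(β S_N^p)] exists and equals log((e^β + e^{−β})/2) = log cosh β. In particular it does not depend on d or p. -/
/-!
The expectation is computed exactly: for every box `N ≥ 1` it equals `cosh β ^ (N₁⋯N_d)`.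
The bonds `i — p·i` form a forest, since the first coordinate strictly grows along each bond.
Peel off a bond `i — p·i` with `i` maximal for that coordinate: the spin at `p·i` then occurs
nowhere else, and since `exp (β s) = cosh β + s sinh β` for `s = ±1` and that spin is independent
of all the others and centred, the bond contributes exactly a factor `cosh β`.
-/

open Filter MeasureTheory ProbabilityTheory

lemma Real.exp_mul_eq_cosh_add_mul_sinh (β : ℝ) {t : ℝ} (ht : t = 1 ∨ t = -1) :
    Real.exp (β * t) = Real.cosh β + t * Real.sinh β := by
  rcases ht with rfl | rfl
  · simp [Real.cosh_add_sinh]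
  · simp [← sub_eq_add_neg, Real.cosh_sub_sinh]

lemma card_Icc_one_pi {ι : Type*} [Fintype ι] [DecidableEq ι] (N : ι → ℕ) :
    (Finset.Icc 1 N).card = ∏ k, N k := by
  simp [Pi.card_Icc]

section

variable {Ω ι : Type*}

lemma norm_exp_mul_sum_mul_le {σ : ι → Ω → ℝ} (hvals : ∀ i ω, σ i ω = 1 ∨ σ i ω = -1)
    (f : ι → ι) (β : ℝ) (s : Finset ι) (ω : Ω) :
    ‖Real.exp (β * ∑ x ∈ s, σ x ω * σ (f x) ω)‖ ≤ Real.exp (|β| * s.card) := by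
  have hterm : ∀ x, |σ x ω * σ (f x) ω| = 1 := fun x => by
    rcases hvals x ω with h | h <;> rcases hvals (f x) ω with h' | h' <;> simp [h, h']
  rw [Real.norm_of_nonneg (Real.exp_nonneg _), Real.exp_le_exp]
  calc β * ∑ x ∈ s, σ x ω * σ (f x) ω ≤ |β| * |∑ x ∈ s, σ x ω * σ (f x) ω| := by
        rw [← abs_mul]; exact le_abs_self _
    _ ≤ |β| * s.card := by
        gcongr
        refine (Finset.abs_sum_le_sum_abs _ _).trans ?_
        simp [hterm]

abbrev iSupComapNe (σ : ι → Ω → ℝ) (v : ι) : MeasurableSpace Ω :=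
  ⨆ j ∈ ({v}ᶜ : Set ι), MeasurableSpace.comap (σ j) inferInstance

lemma measurable_iSupComapNe (σ : ι → Ω → ℝ) {v j : ι} (hj : j ≠ v) :
    Measurable[iSupComapNe σ v] (σ j) :=
  (comap_measurable (σ j)).mono
    (le_iSup₂ (f := fun j (_ : j ∈ ({v}ᶜ : Set ι)) => MeasurableSpace.comap (σ j) _) j hj) le_rfl

variable [MeasurableSpace Ω] {μ : Measure Ω}

lemma ProbabilityTheory.iIndepFun.indepFun_of_measurable_iSupComapNe {σ : ι → Ω → ℝ}
    (hindep : iIndepFun σ μ) (hmeas : ∀ i, Measurable (σ i)) {v : ι} {H : Ω → ℝ}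
    (hH : Measurable[iSupComapNe σ v] H) :
    IndepFun H (σ v) μ := by
  have h := indep_iSup_of_disjoint (fun i => (hmeas i).comap_le) hindep.iIndep
    (disjoint_compl_left (a := ({v} : Set ι)))
  rw [iSup_singleton] at h
  exact indep_of_indep_of_le_left h hH.comap_le

lemma integral_eq_zero_of_eq_one_or_eq_neg_one [IsProbabilityMeasure μ] {X : Ω → ℝ}
    (hX : Measurable X) (hvals : ∀ ω, X ω = 1 ∨ X ω = -1) (hunif : μ {ω | X ω = 1} = 1 / 2) :
    ∫ ω, X ω ∂μ = 0 := by
  set A := {ω | X ω = 1}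
  have hA : MeasurableSet A := hX (measurableSet_singleton 1)
  have hX_eq : X = fun ω => 2 * A.indicator 1 ω - 1 := by
    funext ω
    rcases hvals ω with h | h <;> norm_num [A, Set.indicator, h]
  rw [hX_eq, integral_sub (((integrable_const 1).indicator hA).const_mul 2) (integrable_const 1),
    integral_const_mul, integral_indicator_one hA, measureReal_def, hunif]
  norm_num

lemma integral_mul_exp_mul_mul_eq_cosh_mul [IsProbabilityMeasure μ] {σ : ι → Ω → ℝ}
    (hmeas : ∀ i, Measurable (σ i)) (hindep : iIndepFun σ μ)
    (hvals : ∀ i ω, σ i ω = 1 ∨ σ i ω = -1) (hmean : ∀ i, ∫ ω, σ i ω ∂μ = 0)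
    {G : Ω → ℝ} (hGi : Integrable G μ) {a v : ι} (hav : a ≠ v)
    (hGv : Measurable[iSupComapNe σ v] G) (β : ℝ) :
    ∫ ω, G ω * Real.exp (β * (σ a ω * σ v ω)) ∂μ = Real.cosh β * ∫ ω, G ω ∂μ := by
  have hspin_bound : ∀ i, ∀ᵐ ω ∂μ, ‖σ i ω‖ ≤ 1 := fun i => ae_of_all _ fun ω => by
    rcases hvals i ω with h | h <;> simp [h]
  have hGa : Integrable (fun ω => G ω * σ a ω) μ :=
    hGi.mul_bdd (hmeas a).aestronglyMeasurable (hspin_bound a)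
  have hGav : Integrable (fun ω => G ω * σ a ω * σ v ω) μ :=
    hGa.mul_bdd (hmeas v).aestronglyMeasurable (hspin_bound v)
  have hindep_v : IndepFun (fun ω => G ω * σ a ω) (σ v) μ :=
    hindep.indepFun_of_measurable_iSupComapNe hmeas (hGv.mul (measurable_iSupComapNe σ hav))
  have hsplit : ∀ ω, G ω * Real.exp (β * (σ a ω * σ v ω))
      = Real.cosh β * G ω + Real.sinh β * (G ω * σ a ω * σ v ω) := fun ω => by
    have hspin : σ a ω * σ v ω = 1 ∨ σ a ω * σ v ω = -1 := by
      rcases hvals a ω with h | h <;> rcases hvals v ω with h' | h' <;> simp [h, h']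
    rw [Real.exp_mul_eq_cosh_add_mul_sinh β hspin]
    ring
  simp_rw [hsplit]
  rw [integral_add (hGi.const_mul _) (hGav.const_mul _), integral_const_mul, integral_const_mul,
    hindep_v.integral_fun_mul_eq_mul_integral hGa.aestronglyMeasurable
      (hmeas v).aestronglyMeasurable, hmean, mul_zero, mul_zero, add_zero]

theorem integral_exp_mul_sum_mul_eq_cosh_pow [IsProbabilityMeasure μ] {σ : ι → Ω → ℝ}
    (hmeas : ∀ i, Measurable (σ i)) (hindep : iIndepFun σ μ)
    (hvals : ∀ i ω, σ i ω = 1 ∨ σ i ω = -1) (hmean : ∀ i, ∫ ω, σ i ω ∂μ = 0)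
    {α : Type*} [LinearOrder α] (r : ι → α) (f : ι → ι) (β : ℝ) (E : Finset ι)
    (hr : ∀ x ∈ E, r x < r (f x)) (hf : Set.InjOn f E) :
    ∫ ω, Real.exp (β * ∑ x ∈ E, σ x ω * σ (f x) ω) ∂μ = Real.cosh β ^ E.card := by
  classical
  induction E using Finset.induction_on_max_value r with
  | empty => simp
  | insert a s ha hmax ih =>
  have hne_fa : ∀ x ∈ insert a s, x ≠ f a := by
    intro x hx hxa
    have hxa_le : r x ≤ r a := by
      rcases Finset.mem_insert.1 hx with rfl | hx
      exacts [le_rfl, hmax x hx]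
    exact (hxa_le.trans_lt (hr a (Finset.mem_insert_self a s))).ne (congrArg r hxa)
  have hf_ne_fa : ∀ x ∈ s, f x ≠ f a := fun x hx hxa =>
    ha (hf (Finset.mem_insert_of_mem hx) (Finset.mem_insert_self a s) hxa ▸ hx)
  set G := fun ω => Real.exp (β * ∑ x ∈ s, σ x ω * σ (f x) ω)
  have hGi : Integrable G μ :=
    .of_bound (by fun_prop) _ (ae_of_all _ (norm_exp_mul_sum_mul_le hvals f β s))
  have hGv : Measurable[iSupComapNe σ (f a)] G := by
    refine Measurable.exp (Measurable.const_mul (Finset.measurable_sum _ fun x hx => ?_) _)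
    exact (measurable_iSupComapNe σ (hne_fa x (Finset.mem_insert_of_mem hx))).mul
      (measurable_iSupComapNe σ (hf_ne_fa x hx))
  have hsplit : ∀ ω, Real.exp (β * ∑ x ∈ insert a s, σ x ω * σ (f x) ω)
      = G ω * Real.exp (β * (σ a ω * σ (f a) ω)) := fun ω => by
    rw [Finset.sum_insert ha, mul_add, Real.exp_add, mul_comm]
  simp_rw [hsplit]
  rw [integral_mul_exp_mul_mul_eq_cosh_mul hmeas hindep hvals hmean hGi
      (hne_fa a (Finset.mem_insert_self a s)) hGv,
    ih (fun x hx => hr x (Finset.mem_insert_of_mem hx)) (hf.mono (by simp)),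
    Finset.card_insert_of_notMem ha, pow_succ']

end

theorem stmt14_general {Ω : Type*} [MeasurableSpace Ω] (μ : Measure Ω)
    [IsProbabilityMeasure μ]
    (d : ℕ) (hd : 0 < d) (p : Fin d → ℕ) (hp : ∀ k, 2 ≤ p k)
    (σ : (Fin d → ℕ) → Ω → ℝ)
    (hmeas : ∀ i, Measurable (σ i))
    (hindep : iIndepFun σ μ)
    (hvals : ∀ i, ∀ ω, σ i ω = 1 ∨ σ i ω = -1)
    (hunif : ∀ i, μ {ω | σ i ω = 1} = 1 / 2)
    (β : ℝ) :
    Tendsto (fun N : Fin d → ℕ =>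
        Real.log (∫ ω, Real.exp (β *
            ∑ i ∈ Finset.Icc (1 : Fin d → ℕ) N,
              σ i ω * σ (fun k => p k * i k) ω) ∂μ) /
          ∏ k, (N k : ℝ))
      atTop (nhds (Real.log ((Real.exp β + Real.exp (-β)) / 2))) := by
  have hmean i := integral_eq_zero_of_eq_one_or_eq_neg_one (hmeas i) (hvals i) (hunif i)
  have hinj : Function.Injective fun (i : Fin d → ℕ) k => p k * i k := fun i j hij =>
    funext fun k => Nat.eq_of_mul_eq_mul_left (by linarith [hp k]) (congrFun hij k)
  let k₀ : Fin d := ⟨0, hd⟩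
  have hrank : ∀ N : Fin d → ℕ, ∀ i ∈ Finset.Icc 1 N, i k₀ < p k₀ * i k₀ := fun N i hi => by
    have hi₀ : 1 ≤ i k₀ := (Finset.mem_Icc.1 hi).1 k₀
    nlinarith [hp k₀]
  refine tendsto_const_nhds.congr' ?_
  filter_upwards [eventually_ge_atTop 1] with N hN
  have hN : (0 : ℝ) < ∏ k, (N k : ℝ) :=
    Finset.prod_pos fun k _ => Nat.cast_pos.2 (hN k)
  rw [integral_exp_mul_sum_mul_eq_cosh_pow hmeas hindep hvals hmean (fun i => i k₀) _ β _
    (hrank N) hinj.injOn, card_Icc_one_pi, Real.log_pow, Real.cosh_eq]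
  push_cast
  field_simp

/-- Let `p₁,…,p_d ≥ 2` be pairwise coprime and `(σ_i)_{i ∈ ℕ^d}` be i.i.d.
uniform on `{−1,1}`.  For the multiple sum
`S_N^p(σ) = ∑_{i ∈ [1,N₁]×⋯×[1,N_d]} σ_i σ_{p·i}` (with `p·i = (p₁i₁,…,p_d i_d)`),
the free energy `F_{1/2}(β) = lim_N log E[exp(β S_N^p)]/(N₁⋯N_d)` exists and
equals `log((e^β + e^{−β})/2) = log cosh β`; in particular it is independent of
`d` and `p`. -/
theorem stmt14 {Ω : Type*} [MeasurableSpace Ω] (μ : Measure Ω)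
    [IsProbabilityMeasure μ]
    (d : ℕ) (hd : 0 < d) (p : Fin d → ℕ) (hp : ∀ k, 2 ≤ p k)
    (hcop : ∀ i j, i ≠ j → Nat.Coprime (p i) (p j))
    (σ : (Fin d → ℕ) → Ω → ℝ)
    (hmeas : ∀ i, Measurable (σ i))
    (hindep : iIndepFun σ μ)
    (hvals : ∀ i, ∀ ω, σ i ω = 1 ∨ σ i ω = -1)
    (hunif : ∀ i, μ {ω | σ i ω = 1} = 1 / 2)
    (β : ℝ) :
    Tendsto (fun N : Fin d → ℕ =>
        Real.log (∫ ω, Real.exp (β *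
            ∑ i ∈ Finset.Icc (1 : Fin d → ℕ) N,
              σ i ω * σ (fun k => p k * i k) ω) ∂μ) /
          ∏ k, (N k : ℝ))
      atTop (nhds (Real.log ((Real.exp β + Real.exp (-β)) / 2))) :=
  stmt14_general μ d hd p hp σ hmeas hindep hvals hunif β
end
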